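/- arXiv:2204.12303 — 2 statements merged into one kernel-verified Lean document; each statement's English description precedes it below -/
import Mathlib

section
/- Let $n$ be a positive integer coprime to $6$, let $f_0 : \mathbb{Z}_n \to [-1,1]$, and define $f(x) = \sum_{a,b \in \mathbb{Z}_n} x(1,a)\, x(2, a+b)\, x(3, a+2b)\, f_0(a+3b)$ for $x : [3] \times \mathbb{Z}_n \to [-1,1]$. Then $\max_{x \in [-1,1]^{[3] \times \mathbb{Z}_n}} |f(x)| \leq n^2 \|f_0\|_{U^3}$. -/
open Finset

private lemma cs_abs {α : Type*} [Fintype α] (F : α → ℝ) :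
    (∑ a, |F a|) ^ 2 ≤ (Fintype.card α : ℝ) * ∑ a, (F a) ^ 2 := by
  have h := Finset.sum_mul_sq_le_sq_mul_sq Finset.univ (fun _ => (1:ℝ)) (fun a => |F a|)
  simpa [sq_abs, Finset.card_univ] using h

private lemma bnd2 (s t w : ℝ) (hs : |s| ≤ 1) (ht : |t| ≤ 1) : s * t * w ≤ |w| := by
  have h : |s * t| ≤ 1 := by
    rw [abs_mul]; exact mul_le_one₀ hs (abs_nonneg _) ht
  calc s * t * w ≤ |s * t * w| := le_abs_self _
    _ = |s * t| * |w| := abs_mul _ _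
    _ ≤ 1 * |w| := mul_le_mul_of_nonneg_right h (abs_nonneg _)
    _ = |w| := one_mul _

private lemma bnd4 (s t u v w : ℝ) (hs : |s| ≤ 1) (ht : |t| ≤ 1) (hu : |u| ≤ 1)
    (hv : |v| ≤ 1) : s * t * u * v * w ≤ |w| := by
  have h : |s * t * u * v| ≤ 1 := by
    rw [abs_mul, abs_mul, abs_mul]
    exact mul_le_one₀ (mul_le_one₀ (mul_le_one₀ hs (abs_nonneg _) ht) (by positivity) hu)
      (by positivity) hv
  calc s * t * u * v * w ≤ |s * t * u * v * w| := le_abs_self _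
    _ = |s * t * u * v| * |w| := abs_mul _ _
    _ ≤ 1 * |w| := mul_le_mul_of_nonneg_right h (abs_nonneg _)
    _ = |w| := one_mul _

private def E3 (n : ℕ) : (ZMod n × ZMod n × ZMod n) ≃ (ZMod n × ZMod n × ZMod n) where
  toFun p := (p.1 + p.2.1, p.2.2 - p.2.1, p.2.1)
  invFun q := (q.1 - q.2.2, q.2.2, q.2.2 + q.2.1)
  left_inv := by rintro ⟨a,b,c⟩; simp only [Prod.mk.injEq]; exact ⟨by ring, trivial, by ring⟩
  right_inv := by rintro ⟨a,b,c⟩; simp only [Prod.mk.injEq]; exact ⟨by ring, by ring, trivial⟩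

private def E4 (n : ℕ) :
    (ZMod n × ZMod n × ZMod n × ZMod n) ≃ (ZMod n × ZMod n × ZMod n × ZMod n) where
  toFun p := (p.1 + p.2.2.1, p.2.1, p.2.2.2 - p.2.2.1, p.2.2.1)
  invFun q := (q.1 - q.2.2.2, q.2.1, q.2.2.2, q.2.2.2 + q.2.2.1)
  left_inv := by
    rintro ⟨a,b,c,d⟩; simp only [Prod.mk.injEq]
    exact ⟨by ring, trivial, trivial, by ring⟩
  right_inv := by
    rintro ⟨a,b,c,d⟩; simp only [Prod.mk.injEq]
    exact ⟨by ring, trivial, by ring, trivial⟩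

private def E5 (n : ℕ) (c2 c3 : ZMod n) (h2 : 2 * c2 = 1) (h3 : 3 * c3 = 1) :
    (ZMod n × ZMod n × ZMod n × ZMod n × ZMod n) ≃
      (ZMod n × ZMod n × ZMod n × ZMod n × ZMod n) where
  toFun p := (p.1 + p.2.2.2.1, 3 * p.2.1, 2 * p.2.2.1, p.2.2.2.2 - p.2.2.2.1, p.2.2.2.1)
  invFun q := (q.1 - q.2.2.2.2, c3 * q.2.1, c2 * q.2.2.1, q.2.2.2.2, q.2.2.2.2 + q.2.2.2.1)
  left_inv := by
    rintro ⟨a,b,c,d,e⟩; simp only [Prod.mk.injEq]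
    exact ⟨by ring, by linear_combination b * h3, by linear_combination c * h2, trivial, by ring⟩
  right_inv := by
    rintro ⟨a,b,c,d,e⟩; simp only [Prod.mk.injEq]
    exact ⟨by ring, by linear_combination b * h3, by linear_combination c * h2, by ring, trivial⟩

private def Eperm (n : ℕ) :
    (ZMod n × ZMod n × ZMod n × ZMod n) ≃ (ZMod n × ZMod n × ZMod n × ZMod n) where
  toFun p := (p.2.2.1, p.2.2.2, p.1, p.2.1)
  invFun q := (q.2.2.1, q.2.2.2, q.1, q.2.1)
  left_inv := by rintro ⟨a,b,c,d⟩; rfl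
  right_inv := by rintro ⟨a,b,c,d⟩; rfl

section
variable (n : ℕ) [NeZero n]

private def Tf (g1 g2 f : ZMod n → ℝ) (a : ZMod n) : ℝ :=
  ∑ b : ZMod n, g1 (a+b) * g2 (a+2*b) * f (a+3*b)

private def Wf (g2 f : ZMod n → ℝ) (q : ZMod n × ZMod n) : ℝ :=
  ∑ b : ZMod n, g2 (q.1+b) * g2 (q.1+b+2*q.2) * f (q.1+2*b) * f (q.1+2*b+3*q.2)

private def Xf (f : ZMod n → ℝ) (r : ZMod n × ZMod n × ZMod n) : ℝ :=
  ∑ b : ZMod n, f (r.1+b) * f (r.1+b+3*r.2.1) * f (r.1+b+2*r.2.2) * f (r.1+b+2*r.2.2+3*r.2.1)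

private def Uf (f : ZMod n → ℝ) : ℝ :=
  ∑ a : ZMod n, ∑ b : ZMod n, ∑ c : ZMod n, ∑ d : ZMod n,
    f a * f (a+b) * f (a+c) * f (a+d) *
      f (a+b+c) * f (a+b+d) * f (a+c+d) * f (a+b+c+d)

variable {n}

private lemma l1 (f g0 g1 g2 : ZMod n → ℝ) (h0 : ∀ a, |g0 a| ≤ 1) :
    |∑ a : ZMod n, ∑ b : ZMod n, g0 a * g1 (a+b) * g2 (a+2*b) * f (a+3*b)|
      ≤ ∑ a : ZMod n, |Tf n g1 g2 f a| := by
  have hS : (∑ a : ZMod n, ∑ b : ZMod n, g0 a * g1 (a+b) * g2 (a+2*b) * f (a+3*b))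
      = ∑ a : ZMod n, g0 a * Tf n g1 g2 f a := by
    refine Finset.sum_congr rfl fun a _ => ?_
    rw [Tf, Finset.mul_sum]
    exact Finset.sum_congr rfl fun b _ => by ring
  rw [hS]
  refine (Finset.abs_sum_le_sum_abs _ _).trans (Finset.sum_le_sum fun a _ => ?_)
  rw [abs_mul]
  calc |g0 a| * |Tf n g1 g2 f a| ≤ 1 * |Tf n g1 g2 f a| :=
        mul_le_mul_of_nonneg_right (h0 a) (abs_nonneg _)
    _ = _ := one_mul _

private lemma l3 (f g1 g2 : ZMod n → ℝ) (h1 : ∀ a, |g1 a| ≤ 1) :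
    ∑ a : ZMod n, (Tf n g1 g2 f a) ^ 2 ≤ ∑ q : ZMod n × ZMod n, |Wf n g2 f q| := by
  have key : ∑ a : ZMod n, (Tf n g1 g2 f a) ^ 2
      = ∑ q : ZMod n × ZMod n, g1 q.1 * g1 (q.1+q.2) * Wf n g2 f q := by
    calc ∑ a : ZMod n, (Tf n g1 g2 f a) ^ 2
        = ∑ p : ZMod n × ZMod n × ZMod n,
            (g1 (p.1+p.2.1) * g2 (p.1+2*p.2.1) * f (p.1+3*p.2.1)) *
            (g1 (p.1+p.2.2) * g2 (p.1+2*p.2.2) * f (p.1+3*p.2.2)) := by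
          simp only [Fintype.sum_prod_type, Tf]
          exact Finset.sum_congr rfl fun a _ => by rw [sq, Finset.sum_mul_sum]
      _ = ∑ q : ZMod n × ZMod n × ZMod n,
            g1 q.1 * g1 (q.1+q.2.1) *
              (g2 (q.1+q.2.2) * g2 (q.1+q.2.2+2*q.2.1) * f (q.1+2*q.2.2) *
                f (q.1+2*q.2.2+3*q.2.1)) := by
          refine Fintype.sum_equiv (E3 n) _ _ ?_
          rintro ⟨a,b,c⟩
          simp only [E3, Equiv.coe_fn_mk]
          ring_nf
      _ = ∑ q : ZMod n × ZMod n, g1 q.1 * g1 (q.1+q.2) * Wf n g2 f q := by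
          simp only [Fintype.sum_prod_type, Wf, Finset.mul_sum]
  rw [key]
  exact Finset.sum_le_sum fun q _ => bnd2 _ _ _ (h1 q.1) (h1 (q.1+q.2))

private lemma l5 (f g2 : ZMod n → ℝ) (hg2 : ∀ a, |g2 a| ≤ 1) :
    ∑ q : ZMod n × ZMod n, (Wf n g2 f q) ^ 2
      ≤ ∑ r : ZMod n × ZMod n × ZMod n, |Xf n f r| := by
  have key : ∑ q : ZMod n × ZMod n, (Wf n g2 f q) ^ 2
      = ∑ r : ZMod n × ZMod n × ZMod n,
          g2 r.1 * g2 (r.1+2*r.2.1) * g2 (r.1+r.2.2) * g2 (r.1+r.2.2+2*r.2.1) * Xf n f r := by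
    calc ∑ q : ZMod n × ZMod n, (Wf n g2 f q) ^ 2
        = ∑ p : ZMod n × ZMod n × ZMod n × ZMod n,
            (g2 (p.1+p.2.2.1) * g2 (p.1+p.2.2.1+2*p.2.1) * f (p.1+2*p.2.2.1) *
              f (p.1+2*p.2.2.1+3*p.2.1)) *
            (g2 (p.1+p.2.2.2) * g2 (p.1+p.2.2.2+2*p.2.1) * f (p.1+2*p.2.2.2) *
              f (p.1+2*p.2.2.2+3*p.2.1)) := by
          simp only [Fintype.sum_prod_type, Wf]
          exact Finset.sum_congr rfl fun u _ => Finset.sum_congr rfl fun h _ => by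
            rw [sq, Finset.sum_mul_sum]
      _ = ∑ q : ZMod n × ZMod n × ZMod n × ZMod n,
            g2 q.1 * g2 (q.1+2*q.2.1) * g2 (q.1+q.2.2.1) * g2 (q.1+q.2.2.1+2*q.2.1) *
              (f (q.1+q.2.2.2) * f (q.1+q.2.2.2+3*q.2.1) * f (q.1+q.2.2.2+2*q.2.2.1) *
                f (q.1+q.2.2.2+2*q.2.2.1+3*q.2.1)) := by
          refine Fintype.sum_equiv (E4 n) _ _ ?_
          rintro ⟨a,b,c,d⟩
          simp only [E4, Equiv.coe_fn_mk]
          ring_nf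
      _ = ∑ r : ZMod n × ZMod n × ZMod n,
            g2 r.1 * g2 (r.1+2*r.2.1) * g2 (r.1+r.2.2) * g2 (r.1+r.2.2+2*r.2.1) * Xf n f r := by
          simp only [Fintype.sum_prod_type, Xf, Finset.mul_sum]
  rw [key]
  exact Finset.sum_le_sum fun r _ =>
    bnd4 _ _ _ _ _ (hg2 r.1) (hg2 (r.1+2*r.2.1)) (hg2 (r.1+r.2.2)) (hg2 (r.1+r.2.2+2*r.2.1))

private lemma l7 (c2 c3 : ZMod n) (h2 : 2 * c2 = 1) (h3 : 3 * c3 = 1) (f : ZMod n → ℝ) :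
    ∑ r : ZMod n × ZMod n × ZMod n, (Xf n f r) ^ 2 = (n : ℝ) * Uf n f := by
  calc ∑ r : ZMod n × ZMod n × ZMod n, (Xf n f r) ^ 2
      = ∑ p : ZMod n × ZMod n × ZMod n × ZMod n × ZMod n,
          (f (p.1+p.2.2.2.1) * f (p.1+p.2.2.2.1+3*p.2.1) * f (p.1+p.2.2.2.1+2*p.2.2.1) *
            f (p.1+p.2.2.2.1+2*p.2.2.1+3*p.2.1)) *
          (f (p.1+p.2.2.2.2) * f (p.1+p.2.2.2.2+3*p.2.1) * f (p.1+p.2.2.2.2+2*p.2.2.1) *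
            f (p.1+p.2.2.2.2+2*p.2.2.1+3*p.2.1)) := by
        simp only [Fintype.sum_prod_type, Xf]
        exact Finset.sum_congr rfl fun v _ => Finset.sum_congr rfl fun h _ =>
          Finset.sum_congr rfl fun k _ => by rw [sq, Finset.sum_mul_sum]
    _ = ∑ q : ZMod n × ZMod n × ZMod n × ZMod n × ZMod n,
          f q.1 * f (q.1+q.2.1) * f (q.1+q.2.2.1) * f (q.1+q.2.2.2.1) *
            f (q.1+q.2.1+q.2.2.1) * f (q.1+q.2.1+q.2.2.2.1) * f (q.1+q.2.2.1+q.2.2.2.1) *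
            f (q.1+q.2.1+q.2.2.1+q.2.2.2.1) := by
        refine Fintype.sum_equiv (E5 n c2 c3 h2 h3) _ _ ?_
        rintro ⟨a,b,c,d,e⟩
        simp only [E5, Equiv.coe_fn_mk]
        ring_nf
    _ = (n : ℝ) * Uf n f := by
        simp only [Fintype.sum_prod_type, Finset.sum_const, Finset.card_univ, ZMod.card,
          nsmul_eq_mul, Uf, Finset.mul_sum]

private lemma l8 (f : ZMod n → ℝ) : 0 ≤ Uf n f := by
  have key : Uf n f
      = ∑ c : ZMod n, ∑ d : ZMod n,
          (∑ a : ZMod n, f a * f (a+c) * f (a+d) * f (a+c+d)) ^ 2 := by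
    calc Uf n f
        = ∑ p : ZMod n × ZMod n × ZMod n × ZMod n,
            f p.1 * f (p.1+p.2.1) * f (p.1+p.2.2.1) * f (p.1+p.2.2.2) *
              f (p.1+p.2.1+p.2.2.1) * f (p.1+p.2.1+p.2.2.2) * f (p.1+p.2.2.1+p.2.2.2) *
              f (p.1+p.2.1+p.2.2.1+p.2.2.2) := by
          simp only [Uf, Fintype.sum_prod_type]
      _ = ∑ q : ZMod n × ZMod n × ZMod n × ZMod n,
            (f q.2.2.1 * f (q.2.2.1+q.1) * f (q.2.2.1+q.2.1) * f (q.2.2.1+q.1+q.2.1)) *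
            (f (q.2.2.1+q.2.2.2) * f (q.2.2.1+q.2.2.2+q.1) * f (q.2.2.1+q.2.2.2+q.2.1) *
              f (q.2.2.1+q.2.2.2+q.1+q.2.1)) := by
          refine Fintype.sum_equiv (Eperm n) _ _ ?_
          rintro ⟨a,b,c,d⟩
          simp only [Eperm, Equiv.coe_fn_mk]
          ring_nf
      _ = ∑ c : ZMod n, ∑ d : ZMod n,
            (∑ a : ZMod n, f a * f (a+c) * f (a+d) * f (a+c+d)) ^ 2 := by
          simp only [Fintype.sum_prod_type]
          refine Finset.sum_congr rfl fun c _ => Finset.sum_congr rfl fun d _ => ?_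
          rw [sq, Finset.sum_mul_sum]
          refine Finset.sum_congr rfl fun a _ => ?_
          exact Fintype.sum_equiv (Equiv.addLeft a) _ _ fun b => by
            simp only [Equiv.coe_addLeft]
  rw [key]
  positivity

private lemma l2 {α : Type*} [Fintype α] (c : ℝ) (hc : (Fintype.card α : ℝ) = c) (F : α → ℝ) :
    (∑ a, |F a|) ^ 2 ≤ c * ∑ a, (F a) ^ 2 := by
  have := cs_abs F; rwa [hc] at this

private lemma key (c2 c3 : ZMod n) (h2 : 2 * c2 = 1) (h3 : 3 * c3 = 1)
    (f g0 g1 g2 : ZMod n → ℝ) (h0 : ∀ a, |g0 a| ≤ 1)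
    (h1 : ∀ a, |g1 a| ≤ 1) (hg2 : ∀ a, |g2 a| ≤ 1) :
    |∑ a : ZMod n, ∑ b : ZMod n, g0 a * g1 (a+b) * g2 (a+2*b) * f (a+3*b)| ^ 8
      ≤ (n : ℝ) ^ 12 * Uf n f := by
  have hN : (0:ℝ) ≤ n := Nat.cast_nonneg n
  have hcard1 : (Fintype.card (ZMod n) : ℝ) = (n : ℝ) := by simp [ZMod.card]
  have hcard2 : (Fintype.card (ZMod n × ZMod n) : ℝ) = (n : ℝ) ^ 2 := by
    simp [ZMod.card]; ring
  have hcard3 : (Fintype.card (ZMod n × ZMod n × ZMod n) : ℝ) = (n : ℝ) ^ 3 := by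
    simp [ZMod.card]; ring
  have hA : (0:ℝ) ≤ |∑ a : ZMod n, ∑ b : ZMod n, g0 a * g1 (a+b) * g2 (a+2*b) * f (a+3*b)| :=
    abs_nonneg _
  have s1 := l1 f g0 g1 g2 h0
  have cT := l2 (α := ZMod n) _ hcard1 (Tf n g1 g2 f)
  have s3 := l3 f g1 g2 h1
  have cW := l2 (α := ZMod n × ZMod n) _ hcard2 (Wf n g2 f)
  have s5 := l5 f g2 hg2
  have cX := l2 (α := ZMod n × ZMod n × ZMod n) _ hcard3 (Xf n f)
  have s7 := l7 c2 c3 h2 h3 f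
  have hW0 : (0:ℝ) ≤ ∑ q : ZMod n × ZMod n, |Wf n g2 f q| :=
    Finset.sum_nonneg fun q _ => abs_nonneg _
  have hX0 : (0:ℝ) ≤ ∑ r : ZMod n × ZMod n × ZMod n, |Xf n f r| :=
    Finset.sum_nonneg fun r _ => abs_nonneg _
  set A := |∑ a : ZMod n, ∑ b : ZMod n, g0 a * g1 (a+b) * g2 (a+2*b) * f (a+3*b)| with hAdef
  have q2 : A ^ 2 ≤ (n : ℝ) * ∑ q : ZMod n × ZMod n, |Wf n g2 f q| := by
    calc A ^ 2 ≤ (∑ a : ZMod n, |Tf n g1 g2 f a|) ^ 2 := pow_le_pow_left₀ hA s1 2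
      _ ≤ (n : ℝ) * ∑ a : ZMod n, (Tf n g1 g2 f a) ^ 2 := cT
      _ ≤ (n : ℝ) * ∑ q : ZMod n × ZMod n, |Wf n g2 f q| :=
          mul_le_mul_of_nonneg_left s3 hN
  have q4 : A ^ 4 ≤ (n : ℝ) ^ 4 * ∑ r : ZMod n × ZMod n × ZMod n, |Xf n f r| := by
    calc A ^ 4 = (A ^ 2) ^ 2 := by ring
      _ ≤ ((n : ℝ) * ∑ q : ZMod n × ZMod n, |Wf n g2 f q|) ^ 2 :=
          pow_le_pow_left₀ (by positivity) q2 2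
      _ = (n : ℝ) ^ 2 * (∑ q : ZMod n × ZMod n, |Wf n g2 f q|) ^ 2 := by ring
      _ ≤ (n : ℝ) ^ 2 * ((n : ℝ) ^ 2 * ∑ q : ZMod n × ZMod n, (Wf n g2 f q) ^ 2) :=
          mul_le_mul_of_nonneg_left cW (by positivity)
      _ = (n : ℝ) ^ 4 * ∑ q : ZMod n × ZMod n, (Wf n g2 f q) ^ 2 := by ring
      _ ≤ (n : ℝ) ^ 4 * ∑ r : ZMod n × ZMod n × ZMod n, |Xf n f r| :=
          mul_le_mul_of_nonneg_left s5 (by positivity)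
  calc A ^ 8 = (A ^ 4) ^ 2 := by ring
    _ ≤ ((n : ℝ) ^ 4 * ∑ r : ZMod n × ZMod n × ZMod n, |Xf n f r|) ^ 2 :=
        pow_le_pow_left₀ (by positivity) q4 2
    _ = (n : ℝ) ^ 8 * (∑ r : ZMod n × ZMod n × ZMod n, |Xf n f r|) ^ 2 := by ring
    _ ≤ (n : ℝ) ^ 8 * ((n : ℝ) ^ 3 * ∑ r : ZMod n × ZMod n × ZMod n, (Xf n f r) ^ 2) :=
        mul_le_mul_of_nonneg_left cX (by positivity)
    _ = (n : ℝ) ^ 11 * ∑ r : ZMod n × ZMod n × ZMod n, (Xf n f r) ^ 2 := by ring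
    _ = (n : ℝ) ^ 11 * ((n : ℝ) * Uf n f) := by rw [s7]
    _ = (n : ℝ) ^ 12 * Uf n f := by ring

end

set_option maxHeartbeats 1000000 in
theorem stmt5 (n : ℕ) [NeZero n] (hn : Nat.Coprime n 6)
    (f0 : ZMod n → ℝ) (hf0 : ∀ a, |f0 a| ≤ 1)
    (x : Fin 3 × ZMod n → ℝ) (hx : ∀ p, |x p| ≤ 1) :
    |∑ a : ZMod n, ∑ b : ZMod n,
        x (0, a) * x (1, a + b) * x (2, a + 2 * b) * f0 (a + 3 * b)|
      ≤ (n : ℝ) ^ 2 *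
        ((∑ a : ZMod n, ∑ b : ZMod n, ∑ c : ZMod n, ∑ d : ZMod n,
            f0 a * f0 (a + b) * f0 (a + c) * f0 (a + d) *
              f0 (a + b + c) * f0 (a + b + d) * f0 (a + c + d) * f0 (a + b + c + d)) /
          (n : ℝ) ^ 4) ^ ((1 : ℝ) / 8) := by
  have hu3 : IsUnit ((3:ZMod n)) := by
    have : IsUnit ((3:ℕ) : ZMod n) := (ZMod.isUnit_iff_coprime 3 n).mpr
      (Nat.Coprime.coprime_dvd_left (by norm_num) hn.symm)
    simpa using this
  have hu2 : IsUnit ((2:ZMod n)) := by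
    have : IsUnit ((2:ℕ) : ZMod n) := (ZMod.isUnit_iff_coprime 2 n).mpr
      (Nat.Coprime.coprime_dvd_left (by norm_num) hn.symm)
    simpa using this
  obtain ⟨c3, hc3⟩ := hu3.exists_right_inv
  obtain ⟨c2, hc2⟩ := hu2.exists_right_inv
  have hk : |∑ a : ZMod n, ∑ b : ZMod n,
        x (0, a) * x (1, a + b) * x (2, a + 2 * b) * f0 (a + 3 * b)| ^ 8
      ≤ (n : ℝ) ^ 12 * Uf n f0 :=
    key c2 c3 hc2 hc3 f0 (fun a => x (0, a)) (fun a => x (1, a)) (fun a => x (2, a))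
      (fun a => hx _) (fun a => hx _) (fun a => hx _)
  have hU : 0 ≤ Uf n f0 := l8 f0
  have hn0 : (0:ℝ) < n := by
    exact_mod_cast Nat.pos_of_ne_zero (NeZero.ne n)
  have ht : (0:ℝ) ≤ Uf n f0 / (n:ℝ)^4 := by positivity
  have h8 : ((Uf n f0 / (n:ℝ)^4) ^ ((1:ℝ)/8)) ^ (8:ℕ)
      = Uf n f0 / (n:ℝ)^4 := by
    rw [← Real.rpow_natCast ((Uf n f0 / (n:ℝ)^4) ^ ((1:ℝ)/8)) 8, ← Real.rpow_mul ht]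
    norm_num
  have hfin : |∑ a : ZMod n, ∑ b : ZMod n,
        x (0, a) * x (1, a + b) * x (2, a + 2 * b) * f0 (a + 3 * b)| ^ 8
      ≤ ((n : ℝ) ^ 2 * (Uf n f0 / (n:ℝ)^4) ^ ((1:ℝ)/8)) ^ 8 := by
    calc |∑ a : ZMod n, ∑ b : ZMod n,
          x (0, a) * x (1, a + b) * x (2, a + 2 * b) * f0 (a + 3 * b)| ^ 8
        ≤ (n : ℝ) ^ 12 * Uf n f0 := hk
      _ = ((n : ℝ) ^ 2) ^ 8 * (Uf n f0 / (n:ℝ)^4) := by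
          field_simp
      _ = ((n : ℝ) ^ 2 * (Uf n f0 / (n:ℝ)^4) ^ ((1:ℝ)/8)) ^ 8 := by
          rw [mul_pow, h8]
  have goal2 : |∑ a : ZMod n, ∑ b : ZMod n,
        x (0, a) * x (1, a + b) * x (2, a + 2 * b) * f0 (a + 3 * b)|
      ≤ (n : ℝ) ^ 2 * (Uf n f0 / (n:ℝ)^4) ^ ((1:ℝ)/8) :=
    le_of_pow_le_pow_left₀ (by norm_num) (by positivity) hfin
  exact goal2
end

section
/- Let $f$ be a multilinear cubic form $f(x) = \sum_{S \in \binom{[n]}{3}} c_S \chi_S(x)$ with slices $M_i$ (the symmetric matrix with $(j,k)$-entry $c_{\{i,j,k\}}$ for pairwise distinct $i,j,k$, zero otherwise) and $\Delta(f) = \max_i \|M_i\| > 0$. Then there exist $d \in \mathbb{N}$, pairwise commuting matrices $A_1, \dots, A_n \in \mathbb{R}^{d \times d}$ with $\|A_i\| \leq 1$ and $A_i^2 = 0$, and orthogonal unit vectors $u, v \in \mathbb{R}^d$, such that $\langle u, A_i v \rangle = 0$, $\langle u, A_i A_j v \rangle = 0$, and $\langle u, A_i A_j A_k v \rangle = c_{\{i,j,k\}}/\Delta(f)$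 for all pairwise distinct $i, j, k \in [n]$. -/
open Matrix

noncomputable def opNorm {ι : Type*} [Fintype ι] [DecidableEq ι] (M : Matrix ι ι ℝ) : ℝ :=
  ‖LinearMap.toContinuousLinearMap (Matrix.toEuclideanLin M)‖

def sliceM {n : ℕ} (c : Finset (Fin n) → ℝ) (i : Fin n) : Matrix (Fin n) (Fin n) ℝ :=
  Matrix.of fun j k => if i ≠ j ∧ i ≠ k ∧ j ≠ k then c {i, j, k} else 0

lemma norm_toEuc {ι : Type*} [Fintype ι] [DecidableEq ι] (M : Matrix ι ι ℝ) (x : ι → ℝ) :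
    ‖Matrix.toEuclideanLin M ((WithLp.equiv 2 (ι → ℝ)).symm x)‖ ^ 2 = ∑ l, (M.mulVec x l) ^ 2 := by
  rw [WithLp.equiv_symm_apply, Matrix.toEuclideanLin_apply_piLp_toLp, EuclideanSpace.norm_eq]
  rw [Real.sq_sqrt (by positivity)]
  simp [PiLp.toLp_apply, sq_abs]

lemma opNorm_le_of {ι : Type*} [Fintype ι] [DecidableEq ι] {M : Matrix ι ι ℝ} {C : ℝ}
    (hC : 0 ≤ C) (h : ∀ x : ι → ℝ, ∑ l, (M.mulVec x l) ^ 2 ≤ C ^ 2 * ∑ l, (x l) ^ 2) :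
    opNorm M ≤ C := by
  apply ContinuousLinearMap.opNorm_le_bound _ hC
  intro y
  have hy : y = (WithLp.equiv 2 (ι → ℝ)).symm ((WithLp.equiv 2 (ι → ℝ)) y) := rfl
  set x : ι → ℝ := (WithLp.equiv 2 (ι → ℝ)) y with hx
  have h1 : ‖LinearMap.toContinuousLinearMap (Matrix.toEuclideanLin M) y‖ ^ 2
      = ∑ l, (M.mulVec x l) ^ 2 := by
    rw [LinearMap.coe_toContinuousLinearMap', hy, norm_toEuc]
  have h2 : ‖y‖ ^ 2 = ∑ l, (x l) ^ 2 := by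
    rw [EuclideanSpace.norm_eq, Real.sq_sqrt (by positivity)]
    simp only [Real.norm_eq_abs, sq_abs]
    rfl
  have := h x
  nlinarith [norm_nonneg (LinearMap.toContinuousLinearMap (Matrix.toEuclideanLin M) y),
    norm_nonneg y, mul_nonneg hC (norm_nonneg y)]

lemma sum_sq_mulVec_le {ι : Type*} [Fintype ι] [DecidableEq ι] {M : Matrix ι ι ℝ} {C : ℝ}
    (h : opNorm M ≤ C) (x : ι → ℝ) :
    ∑ l, (M.mulVec x l) ^ 2 ≤ C ^ 2 * ∑ l, (x l) ^ 2 := by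
  set y : EuclideanSpace ℝ ι := (WithLp.equiv 2 (ι → ℝ)).symm x with hy
  have h1 := norm_toEuc M x
  have h2 : ‖y‖ ^ 2 = ∑ l, (x l) ^ 2 := by
    rw [EuclideanSpace.norm_eq, Real.sq_sqrt (by positivity)]
    simp [hy, PiLp.toLp_apply, sq_abs]
  have h3 : ‖Matrix.toEuclideanLin M y‖ ≤ C * ‖y‖ := by
    calc ‖Matrix.toEuclideanLin M y‖
        = ‖LinearMap.toContinuousLinearMap (Matrix.toEuclideanLin M) y‖ := rfl
      _ ≤ opNorm M * ‖y‖ := ContinuousLinearMap.le_opNorm _ _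
      _ ≤ C * ‖y‖ := mul_le_mul_of_nonneg_right h (norm_nonneg y)
  nlinarith [norm_nonneg (Matrix.toEuclideanLin M y), norm_nonneg y]

lemma sliceM_swap12 {n : ℕ} (c : Finset (Fin n) → ℝ) (i j k : Fin n) :
    sliceM c i j k = sliceM c j i k := by
  simp only [sliceM, Matrix.of_apply]
  have h : ({i, j, k} : Finset (Fin n)) = {j, i, k} := Finset.insert_comm i j {k}
  rw [h]
  split_ifs with h1 h2 <;> tauto

lemma sliceM_swap23 {n : ℕ} (c : Finset (Fin n) → ℝ) (i j k : Fin n) :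
    sliceM c i j k = sliceM c i k j := by
  simp only [sliceM, Matrix.of_apply]
  have h : ({i, j, k} : Finset (Fin n)) = {i, k, j} := by
    rw [Finset.pair_comm j k]
  rw [h]
  split_ifs with h1 h2 <;> tauto

lemma sliceM_swap13 {n : ℕ} (c : Finset (Fin n) → ℝ) (i j k : Fin n) :
    sliceM c i j k = sliceM c k j i := by
  rw [sliceM_swap23, sliceM_swap12, sliceM_swap23]

lemma sliceM_diag1 {n : ℕ} (c : Finset (Fin n) → ℝ) (i k : Fin n) :
    sliceM c i i k = 0 := by simp [sliceM]

lemma sliceM_diag2 {n : ℕ} (c : Finset (Fin n) → ℝ) (i j : Fin n) :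
    sliceM c i j i = 0 := by simp [sliceM]

abbrev Idx (n : ℕ) := Fin 1 ⊕ Fin n ⊕ Fin n ⊕ Fin 1

noncomputable def Bmat (n : ℕ) (c : Finset (Fin n) → ℝ) (Δ : ℝ) (i : Fin n) :
    Matrix (Idx n) (Idx n) ℝ :=
  Matrix.of fun r s => match r, s with
    | .inr (.inl j), .inl _ => if j = i then 1 else 0
    | .inr (.inr (.inl k)), .inr (.inl j) => sliceM c i j k / Δ
    | .inr (.inr (.inr _)), .inr (.inr (.inl k)) => if k = i then 1 else 0
    | _, _ => 0

lemma Bmat_comm (n : ℕ) (c : Finset (Fin n) → ℝ) (Δ : ℝ) (i j : Fin n) :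
    Bmat n c Δ i * Bmat n c Δ j = Bmat n c Δ j * Bmat n c Δ i := by
  ext r s
  rcases r with a | (jj | (kk | b)) <;> rcases s with a' | (jj' | (kk' | b')) <;>
    simp [mul_apply, Bmat, Fintype.sum_sum_type, Finset.sum_ite_eq', ite_and] <;>
    first
      | (rw [sliceM_swap12]; done)
      | (rw [sliceM_swap13]; done)

lemma Bmat_sq (n : ℕ) (c : Finset (Fin n) → ℝ) (Δ : ℝ) (i : Fin n) :
    Bmat n c Δ i * Bmat n c Δ i = 0 := by
  ext r s
  rcases r with a | (jj | (kk | b)) <;> rcases s with a' | (jj' | (kk' | b')) <;>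
    simp [mul_apply, Bmat, Fintype.sum_sum_type, Finset.sum_ite_eq', ite_and,
      sliceM_diag1, sliceM_diag2]

lemma Bmat_entry1 (n : ℕ) (c : Finset (Fin n) → ℝ) (Δ : ℝ) (i : Fin n) :
    Bmat n c Δ i (.inr (.inr (.inr 0))) (.inl 0) = 0 := rfl

lemma Bmat_entry2 (n : ℕ) (c : Finset (Fin n) → ℝ) (Δ : ℝ) (i j : Fin n) :
    (Bmat n c Δ i * Bmat n c Δ j) (.inr (.inr (.inr 0))) (.inl 0) = 0 := by
  simp [mul_apply, Bmat, Fintype.sum_sum_type, Finset.sum_ite_eq', ite_and]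

lemma Bmat_entry3 (n : ℕ) (c : Finset (Fin n) → ℝ) (Δ : ℝ) (i j k : Fin n)
    (hij : i ≠ j) (hik : i ≠ k) (hjk : j ≠ k) :
    (Bmat n c Δ i * Bmat n c Δ j * Bmat n c Δ k) (.inr (.inr (.inr 0))) (.inl 0)
      = c {i, j, k} / Δ := by
  simp [mul_apply, Bmat, Fintype.sum_sum_type, Finset.sum_ite_eq', ite_and,
    Finset.sum_mul, Finset.mul_sum]
  rw [sliceM_swap13, sliceM_swap23]
  simp [sliceM, hij, hik, hjk, hij.symm, hik.symm, hjk.symm]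

lemma Bmat_norm (n : ℕ) (c : Finset (Fin n) → ℝ) (Δ : ℝ) (hΔpos : 0 < Δ) (i : Fin n)
    (hsl : opNorm (sliceM c i) ≤ Δ) : opNorm (Bmat n c Δ i) ≤ 1 := by
  apply opNorm_le_of zero_le_one
  intro x
  set x1 : Fin n → ℝ := fun j => x (.inr (.inl j)) with hx1
  have hrow2 : ∀ k, (Bmat n c Δ i).mulVec x (.inr (.inr (.inl k)))
      = (sliceM c i).mulVec x1 k / Δ := by
    intro k
    simp only [Matrix.mulVec, dotProduct, Bmat, Matrix.of_apply, Fintype.sum_sum_type,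
      Finset.sum_div]
    simp only [Fin.sum_univ_one]
    rw [show (∑ j, sliceM c i j k / Δ * x (.inr (.inl j))) =
        ∑ j, sliceM c i k j * x1 j / Δ from Finset.sum_congr rfl fun j _ => by
          rw [sliceM_swap23]; ring]
    simp
  have hrow1 : ∀ j : Fin n, (Bmat n c Δ i).mulVec x (.inr (.inl j))
      = if j = i then x (.inl 0) else 0 := by
    intro j
    simp [Matrix.mulVec, dotProduct, Bmat, Fintype.sum_sum_type]
  have hrow0 : ∀ a : Fin 1, (Bmat n c Δ i).mulVec x (.inl a) = 0 := by
    intro a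
    simp [Matrix.mulVec, dotProduct, Bmat, Fintype.sum_sum_type]
  have hrow3 : ∀ b : Fin 1, (Bmat n c Δ i).mulVec x (.inr (.inr (.inr b)))
      = x (.inr (.inr (.inl i))) := by
    intro b
    simp [Matrix.mulVec, dotProduct, Bmat, Fintype.sum_sum_type, Finset.sum_ite_eq']
  rw [Fintype.sum_sum_type, Fintype.sum_sum_type, Fintype.sum_sum_type,
    Fintype.sum_sum_type, Fintype.sum_sum_type, Fintype.sum_sum_type]
  simp only [hrow0, hrow1, hrow2, hrow3, Fin.sum_univ_one]
  have key := sum_sq_mulVec_le hsl x1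
  have hsingle : x (.inr (.inr (.inl i))) ^ 2 ≤ ∑ k, x (.inr (.inr (.inl k))) ^ 2 :=
    Finset.single_le_sum (f := fun k => x (.inr (.inr (.inl k))) ^ 2)
      (fun k _ => sq_nonneg _) (Finset.mem_univ i)
  have hsq : (∑ j, (if j = i then x (.inl 0) else 0) ^ 2) = x (.inl 0) ^ 2 := by
    have h' : ∀ j : Fin n, (if j = i then x (.inl 0) else 0) ^ 2
        = if j = i then x (.inl 0) ^ 2 else 0 := fun j => by split_ifs <;> simp
    rw [Finset.sum_congr rfl fun j _ => h' j, Finset.sum_ite_eq']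
    simp
  rw [hsq]
  have hdiv : (∑ k, ((sliceM c i).mulVec x1 k / Δ) ^ 2)
      = (∑ k, ((sliceM c i).mulVec x1 k) ^ 2) / Δ ^ 2 := by
    rw [Finset.sum_div]
    exact Finset.sum_congr rfl fun k _ => by ring
  rw [hdiv]
  have h1 : (∑ k, ((sliceM c i).mulVec x1 k) ^ 2) / Δ ^ 2 ≤ ∑ j, x1 j ^ 2 := by
    rw [div_le_iff₀ (by positivity)]
    calc (∑ k, ((sliceM c i).mulVec x1 k) ^ 2) ≤ Δ ^ 2 * ∑ j, x1 j ^ 2 := key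
      _ = (∑ j, x1 j ^ 2) * Δ ^ 2 := by ring
  simp only [hx1] at h1 ⊢
  nlinarith [sq_nonneg (x (.inl 0)), sq_nonneg (x (.inr (.inr (.inr 0))))]

lemma opNorm_submatrix_le {I : Type*} [Fintype I] [DecidableEq I] {d : ℕ}
    (e : I ≃ Fin d) (M : Matrix I I ℝ) {C : ℝ} (hC : 0 ≤ C) (h : opNorm M ≤ C) :
    opNorm (M.submatrix ⇑e.symm ⇑e.symm) ≤ C := by
  apply opNorm_le_of hC
  intro x
  rw [Matrix.submatrix_mulVec_equiv]
  have h1 : ∑ l, (((M.mulVec (x ∘ ⇑e.symm.symm)) ∘ ⇑e.symm) l) ^ 2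
      = ∑ r, (M.mulVec (x ∘ ⇑e) r) ^ 2 := by
    simp only [Equiv.symm_symm]
    exact Equiv.sum_comp e.symm fun r => (M.mulVec (x ∘ ⇑e) r) ^ 2
  rw [h1]
  have h2 := sum_sq_mulVec_le h (x ∘ ⇑e)
  have h3 : ∑ r, ((x ∘ ⇑e) r) ^ 2 = ∑ l, (x l) ^ 2 :=
    Equiv.sum_comp e fun l => (x l) ^ 2
  rw [h3] at h2
  exact h2

lemma dot_transport {I : Type*} [Fintype I] [DecidableEq I] {d : ℕ}
    (e : I ≃ Fin d) (M : Matrix I I ℝ) (U V : I → ℝ) :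
    (U ∘ ⇑e.symm) ⬝ᵥ (M.submatrix ⇑e.symm ⇑e.symm).mulVec (V ∘ ⇑e.symm) = U ⬝ᵥ M.mulVec V := by
  rw [Matrix.submatrix_mulVec_equiv]
  have hVe : (V ∘ ⇑e.symm) ∘ ⇑e.symm.symm = V := by
    ext r; simp
  rw [hVe]
  exact Equiv.sum_comp e.symm fun r => U r * M.mulVec V r

lemma dot_indicator {n : ℕ} (M : Matrix (Idx n) (Idx n) ℝ) :
    (fun r => if r = (.inr (.inr (.inr 0)) : Idx n) then (1:ℝ) else 0) ⬝ᵥ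
      M.mulVec (fun r => if r = (.inl 0 : Idx n) then (1:ℝ) else 0)
    = M (.inr (.inr (.inr 0))) (.inl 0) := by
  simp [dotProduct, Matrix.mulVec, Finset.sum_ite_eq', ite_and, mul_comm]

theorem stmt14 (n : ℕ) (c : Finset (Fin n) → ℝ) (Δ : ℝ)
    (hΔ : IsGreatest (Set.range fun i => opNorm (sliceM c i)) Δ) (hΔpos : 0 < Δ) :
    ∃ (d : ℕ) (A : Fin n → Matrix (Fin d) (Fin d) ℝ) (u v : Fin d → ℝ),
      (∑ l, u l ^ 2) = 1 ∧ (∑ l, v l ^ 2) = 1 ∧ (∑ l, u l * v l) = 0 ∧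
      (∀ i j, A i * A j = A j * A i) ∧
      (∀ i, opNorm (A i) ≤ 1) ∧
      (∀ i, A i * A i = 0) ∧
      (∀ i, u ⬝ᵥ (A i).mulVec v = 0) ∧
      (∀ i j, i ≠ j → u ⬝ᵥ (A i * A j).mulVec v = 0) ∧
      (∀ i j k, i ≠ j → i ≠ k → j ≠ k →
        u ⬝ᵥ (A i * A j * A k).mulVec v = c {i, j, k} / Δ) := by
  have hsl : ∀ i, opNorm (sliceM c i) ≤ Δ := fun i => hΔ.2 ⟨i, rfl⟩
  have hcard : Fintype.card (Idx n) = 2 * n + 2 := by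
    simp [Fintype.card_sum]; ring
  obtain e := Fintype.equivFinOfCardEq hcard
  set U : Idx n → ℝ := fun r => if r = .inr (.inr (.inr 0)) then 1 else 0 with hU
  set V : Idx n → ℝ := fun r => if r = .inl 0 then 1 else 0 with hV
  refine ⟨2 * n + 2, fun i => (Bmat n c Δ i).submatrix ⇑e.symm ⇑e.symm,
    U ∘ ⇑e.symm, V ∘ ⇑e.symm, ?_, ?_, ?_, ?_, ?_, ?_, ?_, ?_, ?_⟩
  · rw [show (∑ l, ((U ∘ ⇑e.symm) l) ^ 2) = ∑ r, (U r) ^ 2 from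
      Equiv.sum_comp e.symm fun r => (U r) ^ 2]
    simp [hU, Finset.sum_ite_eq', ite_pow]
  · rw [show (∑ l, ((V ∘ ⇑e.symm) l) ^ 2) = ∑ r, (V r) ^ 2 from
      Equiv.sum_comp e.symm fun r => (V r) ^ 2]
    simp [hV, Finset.sum_ite_eq', ite_pow]
  · rw [show (∑ l, (U ∘ ⇑e.symm) l * (V ∘ ⇑e.symm) l) = ∑ r, U r * V r from
      Equiv.sum_comp e.symm fun r => U r * V r]
    simp [hU, hV, ite_and, apply_ite]
  · intro i j
    rw [Matrix.submatrix_mul_equiv, Matrix.submatrix_mul_equiv, Bmat_comm]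
  · intro i
    exact opNorm_submatrix_le e _ zero_le_one (Bmat_norm n c Δ hΔpos i (hsl i))
  · intro i
    rw [Matrix.submatrix_mul_equiv, Bmat_sq]
    simp
  · intro i
    rw [dot_transport e, hU, hV, dot_indicator]
    exact Bmat_entry1 n c Δ i
  · intro i j _
    rw [Matrix.submatrix_mul_equiv, dot_transport e, hU, hV, dot_indicator]
    exact Bmat_entry2 n c Δ i j
  · intro i j k hij hik hjk
    rw [Matrix.submatrix_mul_equiv, Matrix.submatrix_mul_equiv, dot_transport e, hU, hV,
      dot_indicator]
    exact Bmat_entry3 n c Δ i j k hij hik hjk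
end
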